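/- arXiv:2302.10884 — 3 statements merged into one kernel-verified Lean document; each statement's English description precedes it below -/
import Mathlib

section
/- Let k ∈ ℕ, n ≥ 0 an integer, and I ∈ 𝒫(2^{-n}). For any δ ∈ ℕ⁻¹ with δ < 2^{-n}, 2^n δ ∈ ℕ⁻¹, and any family (f_J)_{J∈𝒫(I,δ)} of Schwartz functions on ℝ^k with supp(f̂_J) ⊆ 𝒰_J for all J, setting f_I = Σ_{J∈𝒫(I,δ)} f_J, one has ‖f_I‖_{L^{p_k}(ℝ^k)} ≤ 𝒟_k(2^n δ)·(Σ_{J∈𝒫(I,δ)} ‖f_J‖²_{L^{p_k}(ℝ^k)})^{1/2}. -/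
open MeasureTheory Real FourierTransform Finset
open scoped RealInnerProductSpace

noncomputable section

/-- Euclidean space `ℝ^k`. -/
abbrev Ek (k : ℕ) := EuclideanSpace ℝ (Fin k)

/-- The moment curve `Γ_k(t) = (t, t², …, t^k)`. -/
def momentCurve (k : ℕ) (t : ℝ) : Ek k := WithLp.toLp 2 (fun j => t ^ ((j : ℕ) + 1))

/-- The `i`-th derivative `Γ_k^{(i)}(t)` of the moment curve. -/
def momentDeriv (k i : ℕ) (t : ℝ) : Ek k := WithLp.toLp 2 (fun j =>
  if i ≤ (j : ℕ) + 1 then (((j : ℕ) + 1).descFactorial i : ℝ) * t ^ ((j : ℕ) + 1 - i) else 0)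

/-- The parallelepiped `C ⬝ 𝒰_J` for the interval `J = [a,b]`: centered at `Γ_k(c_J)`, with
`i`-th side of length `4|J|^i` in direction `Γ_k^{(i)}(c_J)`, dilated by factor `C` about
its center. -/
def UBox (k : ℕ) (C a b : ℝ) : Set (Ek k) :=
  {x | ∃ u : Fin k → ℝ, (∀ i : Fin k, abs (u i) ≤ C * (2 * (b - a) ^ ((i : ℕ) + 1))) ∧
    x = momentCurve k ((a + b) / 2) +
      ∑ i : Fin k, u i • momentDeriv k ((i : ℕ) + 1) ((a + b) / 2)}

/-- The dual parallelepiped `𝒰_J^o`. -/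
def UBoxDual (k : ℕ) (a b : ℝ) : Set (Ek k) :=
  {x | ∀ i : Fin k,
    abs (inner ℝ x (momentDeriv k ((i : ℕ) + 1) ((a + b) / 2)) : ℝ) ≤ ((b - a) ^ ((i : ℕ) + 1))⁻¹ / 4}

/-- The `L¹`-normalized bump function `φ_J` adapted to `𝒰_J^o`, `J = [a,b]`. -/
def phiBump (k : ℕ) (a b : ℝ) (x : Ek k) : ℝ :=
  ((volume (UBoxDual k a b)).toReal)⁻¹ *
    sInf {t : ℝ | 1 ≤ t ∧ t⁻¹ • x ∈ UBoxDual k a b} ^ (-(10 * (k : ℝ)))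

/-- `L^p`-norm (with real exponent) of a function on `ℝ^k`. -/
def LpN {k : ℕ} (p : ℝ) (f : Ek k → ℂ) : ℝ := (∫ x, ‖f x‖ ^ p) ^ p⁻¹

/-- Convolution of two real-valued functions on `ℝ^k`. -/
def cnv {k : ℕ} (f g : Ek k → ℝ) (x : Ek k) : ℝ := ∫ y, f y * g (x - y)

/-- The critical decoupling exponent `p_k = k(k+1)`. -/
def pk (k : ℕ) : ℝ := k * (k + 1)

/-- The `ℓ²L^{p_k}` decoupling inequality for the moment curve `Γ_k` at scale `δ = 1/n`
with constant `C`. -/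
def DecIneq (k n : ℕ) (C : ℝ) : Prop :=
  ∀ f : ℕ → SchwartzMap (Ek k) ℂ,
    (∀ j < n, Function.support (𝓕 ⇑(f j)) ⊆ UBox k 1 ((j : ℝ) / n) (((j : ℝ) + 1) / n)) →
    LpN (pk k) (fun x => ∑ j ∈ Finset.range n, f j x) ≤
      C * (∑ j ∈ Finset.range n, LpN (pk k) (f j) ^ 2) ^ ((1 : ℝ) / 2)

/-- The decoupling constant `𝒟_k(δ)`, `δ = 1/n`: the smallest constant, monotone
nonincreasing in `δ`, for which the decoupling inequality holds. -/
def DecConst (k n : ℕ) : ℝ :=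
  sInf {C : ℝ | 0 ≤ C ∧ ∀ m : ℕ, 0 < m → m ≤ n → DecIneq k m C}

/-- The bilinear decoupling inequality for `Γ_k` at scale `δ = 1/n` with constant `C`. -/
def BilinIneq (k n : ℕ) (C : ℝ) : Prop :=
  ∀ (α β : ℝ) (m₁ m₂ : ℕ), 0 < m₁ → 0 < m₂ →
    0 ≤ α → α + (m₁ : ℝ) / n ≤ 1 → 0 ≤ β → β + (m₂ : ℝ) / n ≤ 1 →
    (∀ x ∈ Set.Icc α (α + (m₁ : ℝ) / n), ∀ y ∈ Set.Icc β (β + (m₂ : ℝ) / n),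
      (4 : ℝ)⁻¹ ≤ |x - y|) →
    ∀ f g : ℕ → SchwartzMap (Ek k) ℂ,
    (∀ j < m₁, Function.support (𝓕 ⇑(f j)) ⊆ UBox k 1 (α + j / n) (α + (j + 1) / n)) →
    (∀ j < m₂, Function.support (𝓕 ⇑(g j)) ⊆ UBox k 1 (β + j / n) (β + (j + 1) / n)) →
    (∫ x, ‖∑ j ∈ Finset.range m₁, f j x‖ ^ (pk k / 2) *
        ‖∑ j ∈ Finset.range m₂, g j x‖ ^ (pk k / 2)) ^ (pk k)⁻¹ ≤
      C * (∑ j ∈ Finset.range m₁, LpN (pk k) (f j) ^ 2) ^ ((1 : ℝ) / 4) *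
        (∑ j ∈ Finset.range m₂, LpN (pk k) (g j) ^ 2) ^ ((1 : ℝ) / 4)

/-- The bilinear decoupling constant `ℬ_k(δ)`, `δ = 1/n`, monotone nonincreasing in `δ`. -/
def BilinConst (k n : ℕ) : ℝ :=
  sInf {C : ℝ | 0 ≤ C ∧ ∀ m : ℕ, 0 < m → m ≤ n → BilinIneq k m C}

/-- Partial sum `Σ_{m ∈ [s,t)} f_m` of a family of Schwartz functions,
corresponding to `f_L = Σ_{K ∈ 𝒫(L,δ)} f_K`. -/
def fSum (f : ℕ → SchwartzMap (Ek 3) ℂ) (s t : ℕ) (x : Ek 3) : ℂ :=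
  ∑ m ∈ Finset.Ico s t, f m x

/-- The asymmetric bilinear inequality on `ℝ³` with exponents `(e₁, e₂)` on the left and
`(r₁, r₂)` on the right, at scale `δ = 1/n`, with first interval of length `1/na` and
second interval of length `1/nb`, with constant `C`. -/
def MIneq (e₁ e₂ r₁ r₂ : ℝ) (n na nb : ℕ) (C : ℝ) : Prop :=
  ∀ α β : ℝ, 0 ≤ α → α + (na : ℝ)⁻¹ ≤ 1 → 0 ≤ β → β + (nb : ℝ)⁻¹ ≤ 1 →
    (∀ x ∈ Set.Icc α (α + (na : ℝ)⁻¹), ∀ y ∈ Set.Icc β (β + (nb : ℝ)⁻¹),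
      (4 : ℝ)⁻¹ ≤ |x - y|) →
    ∀ f g : ℕ → SchwartzMap (Ek 3) ℂ,
    (∀ j < n / na, Function.support (𝓕 ⇑(f j)) ⊆
      UBox 3 1 (α + (j : ℝ) / n) (α + ((j : ℝ) + 1) / n)) →
    (∀ j < n / nb, Function.support (𝓕 ⇑(g j)) ⊆
      UBox 3 1 (β + (j : ℝ) / n) (β + ((j : ℝ) + 1) / n)) →
    ∫ x, cnv (fun y => ‖∑ j ∈ Finset.range (n / na), f j y‖ ^ e₁)
        (phiBump 3 α (α + (na : ℝ)⁻¹)) x *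
      cnv (fun y => ‖∑ j ∈ Finset.range (n / nb), g j y‖ ^ e₂)
        (phiBump 3 β (β + (nb : ℝ)⁻¹)) x ≤
      C ^ (12 : ℕ) * (∑ j ∈ Finset.range (n / na), LpN 12 (f j) ^ 2) ^ r₁ *
        (∑ j ∈ Finset.range (n / nb), LpN 12 (g j) ^ 2) ^ r₂

/-- `M_{6,a,b}(δ)` where `δ = 1/n`, `δ^a = 1/na`, `δ^b = 1/nb`. -/
def M6 (n na nb : ℕ) : ℝ := sInf {C : ℝ | 0 ≤ C ∧ MIneq 6 6 3 3 n na nb C}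

/-- `M_{2,a,b}(δ)` where `δ = 1/n`, `δ^a = 1/na`, `δ^b = 1/nb`. -/
def M2 (n na nb : ℕ) : ℝ := sInf {C : ℝ | 0 ≤ C ∧ MIneq 2 10 1 5 n na nb C}

end

/-!
Write `A` for the lower triangular matrix with entries `C(j+1, l+1) s^(j-l) λ^(l+1)`. By the
binomial theorem the affine map `ξ ↦ A ξ + Γ_k(s)` sends `Γ_k(t)` to `Γ_k(s + λt)`, and
differentiating in `t` it sends the direction `Γ_k^{(i)}(t)` to `λ^i Γ_k^{(i)}(s + λt)`. So it
carries `𝒰_J` onto `𝒰_{s + λJ}`. With `s = i 2^{-n}` and `λ = 2^{-n}`, pulling the Fourier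
transforms of the `f_J` back along this map gives a family adapted to `𝒫(2^n δ)`, and every
`L^p` norm gets multiplied by the same factor `|det A|^{1/p - 1}`. So each admissible constant for
scale `2^n δ` works for the `f_J` too, and then so does their infimum `𝒟_k(2^n δ)`.
-/

noncomputable section

variable {k : ℕ}

theorem momentDeriv_zero (t : ℝ) : momentDeriv k 0 t = momentCurve k t := by
  ext j
  simp [momentDeriv, momentCurve]

theorem hasDerivAt_momentDeriv_apply (i : ℕ) (j : Fin k) (t : ℝ) :
    HasDerivAt (fun t => momentDeriv k i t j) (momentDeriv k (i + 1) t j) t := by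
  simp only [momentDeriv, PiLp.toLp_apply]
  rcases lt_trichotomy i ((j : ℕ) + 1) with hi | rfl | hi
  · obtain ⟨d, hd⟩ : ∃ d, (j : ℕ) + 1 = i + (d + 1) := ⟨(j : ℕ) - i, by omega⟩
    simp only [hd, Nat.le_add_right, if_true, show i + 1 ≤ i + (d + 1) by omega,
      show i + (d + 1) - i = d + 1 by omega, show i + (d + 1) - (i + 1) = d by omega,
      Nat.descFactorial_succ]
    refine ((hasDerivAt_pow (d + 1) t).const_mul
      ((i + (d + 1)).descFactorial i : ℝ)).congr_deriv ?_
    push_cast [Nat.add_sub_cancel]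
    ring
  · simpa using hasDerivAt_const t _
  · simpa [hi.not_ge, (hi.trans (Nat.lt_succ_self i)).not_ge] using hasDerivAt_const t (0 : ℝ)

/-- The matrix of `Γ_k(t) ↦ Γ_k(s + λt) - Γ_k(s)`, read off from the binomial expansion of
`(s + λt)^(j+1)`. -/
def momentRescaleMatrix (k : ℕ) (s lam : ℝ) : Matrix (Fin k) (Fin k) ℝ :=
  Matrix.of fun j l =>
    if (l : ℕ) ≤ j then
      (((j : ℕ) + 1).choose ((l : ℕ) + 1) : ℝ) * s ^ ((j : ℕ) - l) * lam ^ ((l : ℕ) + 1)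
    else 0

theorem det_momentRescaleMatrix (s lam : ℝ) :
    (momentRescaleMatrix k s lam).det = ∏ j : Fin k, lam ^ ((j : ℕ) + 1) := by
  rw [Matrix.det_of_isLowerTriangular]
  · simp [momentRescaleMatrix]
  · intro j l (hjl : j < l)
    simp [momentRescaleMatrix, hjl]

def momentRescale (k : ℕ) (s : ℝ) {lam : ℝ} (hlam : lam ≠ 0) : Ek k ≃L[ℝ] Ek k :=
  (LinearMap.toContinuousLinearMap (Matrix.toEuclideanLin (momentRescaleMatrix k s lam)))
    |>.toContinuousLinearEquivOfDetNeZero (by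
      simp [ContinuousLinearMap.det, Matrix.toEuclideanLin_eq_toLin_orthonormal,
        LinearMap.det_toLin, det_momentRescaleMatrix, Finset.prod_eq_zero_iff, hlam])

theorem momentRescale_apply (s : ℝ) {lam : ℝ} (hlam : lam ≠ 0) (x : Ek k) (j : Fin k) :
    momentRescale k s hlam x j = ∑ l, momentRescaleMatrix k s lam j l * x l :=
  rfl

theorem momentRescale_momentCurve (s : ℝ) {lam : ℝ} (hlam : lam ≠ 0) (t : ℝ) :
    momentRescale k s hlam (momentCurve k t) = momentCurve k (s + lam * t) - momentCurve k s := by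
  ext j
  have hbinom : (s + lam * t) ^ ((j : ℕ) + 1) - s ^ ((j : ℕ) + 1) =
      ∑ l ∈ Finset.range ((j : ℕ) + 1),
        (((j : ℕ) + 1).choose (l + 1) : ℝ) * s ^ ((j : ℕ) - l) * lam ^ (l + 1) * t ^ (l + 1) := by
    rw [add_comm s, add_pow, Finset.sum_range_succ']
    simp only [pow_zero, one_mul, Nat.sub_zero, Nat.choose_zero_right, Nat.cast_one, mul_one,
      add_sub_cancel_right]
    refine Finset.sum_congr rfl fun l hl => ?_
    rw [Finset.mem_range] at hl
    rw [show (j : ℕ) + 1 - (l + 1) = (j : ℕ) - l by omega]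
    ring
  rw [momentRescale_apply, PiLp.sub_apply]
  simp only [momentRescaleMatrix, momentCurve, PiLp.toLp_apply, Matrix.of_apply, ite_mul, zero_mul]
  rw [hbinom, Fin.sum_univ_eq_sum_range (fun l => if l ≤ (j : ℕ) then
      (((j : ℕ) + 1).choose (l + 1) : ℝ) * s ^ ((j : ℕ) - l) * lam ^ (l + 1) * t ^ (l + 1) else 0),
    ← Finset.sum_range_add_sum_Ico _ j.isLt, Finset.sum_eq_zero (s := Finset.Ico _ _)
      (fun l hl => if_neg (by rw [Finset.mem_Ico] at hl; omega)), add_zero]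
  exact Finset.sum_congr rfl fun l hl => if_pos (Nat.lt_succ_iff.mp (Finset.mem_range.mp hl))

theorem momentRescale_momentDeriv_succ_apply (s : ℝ) {lam : ℝ} (hlam : lam ≠ 0) {i : ℕ}
    (j : Fin k) {c d : ℝ} (h : ∀ t, momentRescale k s hlam (momentDeriv k i t) j =
      c * momentDeriv k i (s + lam * t) j + d) (t : ℝ) :
    momentRescale k s hlam (momentDeriv k (i + 1) t) j =
      c * lam * momentDeriv k (i + 1) (s + lam * t) j := by
  have hL : HasDerivAt (fun t => momentRescale k s hlam (momentDeriv k i t) j)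
      (momentRescale k s hlam (momentDeriv k (i + 1) t) j) t := by
    simp only [momentRescale_apply]
    exact HasDerivAt.fun_sum fun l _ => (hasDerivAt_momentDeriv_apply i l t).const_mul _
  have hR : HasDerivAt (fun t => c * momentDeriv k i (s + lam * t) j + d)
      (c * (momentDeriv k (i + 1) (s + lam * t) j * lam)) t := by
    have hlin : HasDerivAt (fun t : ℝ => s + lam * t) lam t := by
      simpa using ((hasDerivAt_id t).const_mul lam).const_add s
    exact (((hasDerivAt_momentDeriv_apply i j _).comp t hlin).const_mul c).add_const d
  rw [funext h] at hL
  rw [hL.unique hR]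
  ring

theorem momentRescale_momentDeriv (s : ℝ) {lam : ℝ} (hlam : lam ≠ 0) (i : ℕ) (t : ℝ) :
    momentRescale k s hlam (momentDeriv k (i + 1) t) =
      lam ^ (i + 1) • momentDeriv k (i + 1) (s + lam * t) := by
  ext j
  rw [PiLp.smul_apply, smul_eq_mul]
  induction i generalizing t with
  | zero =>
    refine (momentRescale_momentDeriv_succ_apply s hlam j (c := 1) (d := -momentCurve k s j)
      (fun t => ?_) t).trans (by ring)
    simp [momentDeriv_zero, momentRescale_momentCurve, sub_eq_add_neg]
  | succ i ih =>
    refine (momentRescale_momentDeriv_succ_apply s hlam j (c := lam ^ (i + 1)) (d := 0)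
      (fun t => by rw [ih, add_zero]) t).trans (by ring)

theorem momentRescale_preimage_UBox_subset (C s : ℝ) {lam : ℝ} (hlam : 0 < lam) (a b : ℝ) :
    (fun ξ => momentRescale k s hlam.ne' ξ + momentCurve k s) ⁻¹'
      UBox k C (s + lam * a) (s + lam * b) ⊆ UBox k C a b := by
  rintro ξ ⟨u, hu, hξ⟩
  refine ⟨fun i => u i / lam ^ ((i : ℕ) + 1), fun i => ?_, ?_⟩
  · have hui := hu i
    rw [show s + lam * b - (s + lam * a) = lam * (b - a) by ring, mul_pow] at hui
    rw [abs_div, abs_of_pos (pow_pos hlam _), div_le_iff₀ (pow_pos hlam _)]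
    exact hui.trans_eq (by ring)
  · apply (momentRescale k s hlam.ne').injective
    simp only [map_add, map_sum, map_smul, momentRescale_momentCurve, momentRescale_momentDeriv,
      smul_smul, div_mul_cancel₀ _ (pow_ne_zero _ hlam.ne')]
    rw [show s + lam * ((a + b) / 2) = (s + lam * a + (s + lam * b)) / 2 by ring,
      eq_sub_of_add_eq hξ]
    abel

open SchwartzMap

section ChangeOfVariables

variable {E F : Type*} [NormedAddCommGroup E] [NormedSpace ℝ E] [FiniteDimensional ℝ E]
  [MeasurableSpace E] [BorelSpace E] [NormedAddCommGroup F] [NormedSpace ℝ F]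
  (μ : Measure E) [μ.IsAddHaarMeasure]

theorem integral_comp_continuousLinearEquiv (A : E ≃L[ℝ] E) (φ : E → F) :
    ∫ x, φ (A x) ∂μ = |(A : E →L[ℝ] E).det|⁻¹ • ∫ x, φ x ∂μ := by
  have hA : LinearMap.det (A : E →ₗ[ℝ] E) ≠ 0 := A.toLinearEquiv.isUnit_det'.ne_zero
  have hmap : ∫ x, φ (A x) ∂μ = ∫ y, φ y ∂(μ.map (A : E →ₗ[ℝ] E)) :=
    (integral_map_equiv A.toHomeomorph.toMeasurableEquiv φ).symm
  rw [hmap, Measure.map_linearMap_addHaar_eq_smul_addHaar μ hA, integral_smul_measure,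
    ENNReal.toReal_ofReal (abs_nonneg _), abs_inv]
  rfl

end ChangeOfVariables

section FourierCompAffine

variable {V E : Type*} [NormedAddCommGroup V] [InnerProductSpace ℝ V] [FiniteDimensional ℝ V]

def ContinuousLinearEquiv.symmAdjoint (A : V ≃L[ℝ] V) : V ≃L[ℝ] V :=
  ContinuousLinearEquiv.equivOfInverse (ContinuousLinearMap.adjoint (A.symm : V →L[ℝ] V))
    (ContinuousLinearMap.adjoint (A : V →L[ℝ] V))
    (fun x => by simp [← ContinuousLinearMap.comp_apply, ← ContinuousLinearMap.adjoint_comp,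
      ContinuousLinearMap.adjoint_id])
    (fun x => by simp [← ContinuousLinearMap.comp_apply, ← ContinuousLinearMap.adjoint_comp,
      ContinuousLinearMap.adjoint_id])

theorem ContinuousLinearEquiv.inner_symm_apply (A : V ≃L[ℝ] V) (y x : V) :
    ⟪A.symm y, x⟫ = ⟪y, A.symmAdjoint x⟫ :=
  (ContinuousLinearMap.adjoint_inner_right (A.symm : V →L[ℝ] V) y x).symm

variable [MeasurableSpace V] [BorelSpace V] [NormedAddCommGroup E] [NormedSpace ℂ E]

theorem norm_fourierInv_comp_affine (A : V ≃L[ℝ] V) (v : V) (h : V → E) (x : V) :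
    ‖𝓕⁻ (fun ξ => h (A ξ + v)) x‖ = |(A : V →L[ℝ] V).det|⁻¹ * ‖𝓕⁻ h (A.symmAdjoint x)‖ := by
  have hphase : ∀ ξ, 𝐞 ⟪ξ, x⟫ • h (A ξ + v) =
      𝐞 (-⟪A.symm v, x⟫) • 𝐞 ⟪A ξ + v, A.symmAdjoint x⟫ • h (A ξ + v) := fun ξ => by
    rw [← mul_smul, ← AddChar.map_add_eq_mul, ← A.inner_symm_apply, map_add A.symm,
      A.symm_apply_apply, inner_add_left, neg_add_cancel_comm_assoc]
  simp only [fourierInv_eq, hphase]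
  rw [integral_comp_continuousLinearEquiv volume A
      (fun η => 𝐞 (-⟪A.symm v, x⟫) • 𝐞 ⟪η + v, A.symmAdjoint x⟫ • h (η + v)),
    integral_add_right_eq_self (fun η => 𝐞 (-⟪A.symm v, x⟫) • 𝐞 ⟪η, A.symmAdjoint x⟫ • h η),
    norm_smul, Real.norm_eq_abs, abs_inv, abs_abs]
  simp only [Circle.smul_def]
  rw [integral_smul, norm_smul, Circle.norm_coe, one_mul]

variable [CompleteSpace E]

/-- `u ↦ 𝓕⁻ (𝓕 u ∘ (A · + v))`. -/
def SchwartzMap.fourierCompAffine (A : V ≃L[ℝ] V) (v : V) : 𝓢(V, E) →L[ℂ] 𝓢(V, E) :=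
  (fourierCLE ℂ 𝓢(V, E)).symm.toContinuousLinearMap ∘L
    compCLMOfAntilipschitz ℂ (g := fun ξ => A ξ + v)
      (by fun_prop)
      (.of_le_mul_dist fun ξ η => by rw [dist_add_right]; exact A.antilipschitz.le_mul_dist ξ η) ∘L
    (fourierCLE ℂ 𝓢(V, E)).toContinuousLinearMap

theorem SchwartzMap.fourier_fourierCompAffine (A : V ≃L[ℝ] V) (v : V) (u : 𝓢(V, E)) :
    𝓕 ⇑(fourierCompAffine A v u) = 𝓕 ⇑u ∘ fun ξ => A ξ + v := by
  rw [← fourier_coe]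
  simp only [fourierCompAffine, ContinuousLinearMap.comp_apply, ContinuousLinearEquiv.coe_coe,
    fourierCLE_apply, fourierCLE_symm_apply, fourier_fourierInv_eq, compCLMOfAntilipschitz_apply]
  rfl

theorem SchwartzMap.norm_fourierCompAffine_apply (A : V ≃L[ℝ] V) (v : V) (u : 𝓢(V, E))
    (x : V) :
    ‖fourierCompAffine A v u x‖ = |(A : V →L[ℝ] V).det|⁻¹ * ‖u (A.symmAdjoint x)‖ := by
  have hinv : 𝓕⁻ (𝓕 ⇑u) = ⇑u := by
    rw [← fourier_coe, ← fourierInv_coe, fourierInv_fourier_eq]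
  have hcoe : ⇑(fourierCompAffine A v u) = 𝓕⁻ fun ξ => 𝓕 ⇑u (A ξ + v) := by
    simp only [fourierCompAffine, ContinuousLinearMap.comp_apply, ContinuousLinearEquiv.coe_coe,
      fourierCLE_apply, fourierCLE_symm_apply, fourierInv_coe, compCLMOfAntilipschitz_apply]
    rfl
  rw [hcoe, norm_fourierInv_comp_affine, hinv]

end FourierCompAffine

section LpNorm

theorem one_le_pk (hk : 0 < k) : 1 ≤ pk k := by
  have : (1 : ℝ) ≤ k := by exact_mod_cast hk
  unfold pk
  nlinarith

theorem LpN_nonneg (p : ℝ) (g : Ek k → ℂ) : 0 ≤ LpN p g :=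
  Real.rpow_nonneg (integral_nonneg fun _ => Real.rpow_nonneg (norm_nonneg _) p) _

theorem LpN_zero (g : Ek k → ℂ) : LpN 0 g = 1 := by
  simp [LpN]

theorem LpN_eq_toReal_eLpNorm {p : ℝ} (hp : 0 < p) (u : 𝓢(Ek k, ℂ)) :
    LpN p u = (eLpNorm u (ENNReal.ofReal p) volume).toReal := by
  have hu : MemLp u (ENNReal.ofReal p) volume := u.memLp _
  rw [hu.eLpNorm_eq_integral_rpow_norm (by simpa using hp) ENNReal.ofReal_ne_top,
    ENNReal.toReal_ofReal hp.le]
  exact (ENNReal.toReal_ofReal (LpN_nonneg p u)).symm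

theorem LpN_sum_le {ι : Type*} {p : ℝ} (hp : 1 ≤ p) (s : Finset ι) (f : ι → 𝓢(Ek k, ℂ)) :
    LpN p (fun x => ∑ j ∈ s, f j x) ≤ ∑ j ∈ s, LpN p (f j) := by
  have hp0 : 0 < p := zero_lt_one.trans_le hp
  have hmem : ∀ j, MemLp (f j) (ENNReal.ofReal p) volume := fun j => (f j).memLp _
  have hfin : ∀ j ∈ s, eLpNorm (f j) (ENNReal.ofReal p) volume ≠ ⊤ :=
    fun j _ => (hmem j).eLpNorm_ne_top
  have hsum : (fun x => ∑ j ∈ s, f j x) = ⇑(∑ j ∈ s, f j) := by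
    ext x
    simp
  rw [hsum, LpN_eq_toReal_eLpNorm hp0,
    Finset.sum_congr rfl fun j _ => LpN_eq_toReal_eLpNorm hp0 _, ← ENNReal.toReal_sum hfin]
  refine ENNReal.toReal_mono (ENNReal.sum_ne_top.mpr hfin) ?_
  rw [show ⇑(∑ j ∈ s, f j) = ∑ j ∈ s, ⇑(f j) by ext x; simp]
  exact eLpNorm_sum_le (fun j _ => (f j).continuous.aestronglyMeasurable)
    (by simpa using ENNReal.ofReal_le_ofReal hp)

theorem LpN_of_norm_eq_mul_comp {p c : ℝ} (hp : 0 < p) (hc : 0 ≤ c) (B : Ek k ≃L[ℝ] Ek k)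
    {g u : Ek k → ℂ} (h : ∀ x, ‖g x‖ = c * ‖u (B x)‖) :
    LpN p g = c * |(B : Ek k →L[ℝ] Ek k).det|⁻¹ ^ p⁻¹ * LpN p u := by
  have hu : 0 ≤ ∫ x, ‖u x‖ ^ p := integral_nonneg fun _ => Real.rpow_nonneg (norm_nonneg _) p
  simp only [LpN, h, Real.mul_rpow hc (norm_nonneg _)]
  rw [integral_const_mul, integral_comp_continuousLinearEquiv volume B (fun y => ‖u y‖ ^ p),
    smul_eq_mul, Real.mul_rpow (by positivity) (by positivity), Real.mul_rpow (by positivity) hu,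
    ← Real.rpow_mul hc, mul_inv_cancel₀ hp.ne', Real.rpow_one, mul_assoc]

end LpNorm

section Decoupling

theorem UBox_zero (C a b : ℝ) : UBox 0 C a b = Set.univ :=
  Set.eq_univ_of_forall fun _ => ⟨Fin.elim0, fun i => i.elim0, Subsingleton.elim _ _⟩

theorem sum_le_sqrt_card_mul_sqrt_sum_sq {ι : Type*} (s : Finset ι) (a : ι → ℝ) :
    ∑ j ∈ s, a j ≤ √(#s : ℝ) * √(∑ j ∈ s, a j ^ 2) := by
  rw [← Real.sqrt_mul (Nat.cast_nonneg _)]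
  exact (le_abs_self _).trans (Real.abs_le_sqrt sq_sum_le_card_mul_sum_sq)

theorem DecIneq.mono {m : ℕ} {C C' : ℝ} (h : DecIneq k m C) (hCC' : C ≤ C') : DecIneq k m C' :=
  fun f hf => (h f hf).trans
    (mul_le_mul_of_nonneg_right hCC' (Real.rpow_nonneg (sum_nonneg fun _ _ => sq_nonneg _) _))

theorem decIneq_sqrt {m : ℕ} (hm : 0 < m) : DecIneq k m √m := by
  intro f _
  rcases k.eq_zero_or_pos with rfl | hk
  · simp only [pk, LpN_zero, CharP.cast_eq_zero, zero_mul, one_pow, sum_const, card_range,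
      nsmul_eq_mul, mul_one, ← Real.sqrt_eq_rpow, Real.mul_self_sqrt (Nat.cast_nonneg _)]
    exact_mod_cast hm
  · calc LpN (pk k) (fun x => ∑ j ∈ range m, f j x)
        ≤ ∑ j ∈ range m, LpN (pk k) (f j) := LpN_sum_le (one_le_pk hk) _ _
      _ ≤ _ := by
        simpa [Real.sqrt_eq_rpow] using
          sum_le_sqrt_card_mul_sqrt_sum_sq (range m) (LpN (pk k) <| f ·)

theorem le_sInf_mul {S : Set ℝ} {L R : ℝ} (hS : S.Nonempty) (hR : 0 ≤ R)
    (h : ∀ C ∈ S, L ≤ C * R) : L ≤ sInf S * R := by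
  rw [mul_comm, ← smul_eq_mul, ← Real.sInf_smul_of_nonneg hR]
  refine le_csInf hS.smul_set ?_
  rintro _ ⟨C, hC, rfl⟩
  simpa [mul_comm] using h C hC

theorem LpN_sum_le_of_map {ι : Type*} (T : 𝓢(Ek k, ℂ) →ₗ[ℂ] 𝓢(Ek k, ℂ)) {p κ C : ℝ}
    (hκ : 0 < κ) (hT : ∀ u, LpN p (T u) = κ * LpN p u) (s : Finset ι) (f : ι → 𝓢(Ek k, ℂ))
    (h : LpN p (fun x => ∑ j ∈ s, T (f j) x) ≤
      C * (∑ j ∈ s, LpN p (T (f j)) ^ 2) ^ ((1 : ℝ) / 2)) :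
    LpN p (fun x => ∑ j ∈ s, f j x) ≤ C * (∑ j ∈ s, LpN p (f j) ^ 2) ^ ((1 : ℝ) / 2) := by
  have hcoe : ∀ g : ι → 𝓢(Ek k, ℂ), (fun x => ∑ j ∈ s, g j x) = ⇑(∑ j ∈ s, g j) := fun g => by
    ext x
    simp
  simp only [hT, mul_pow, ← mul_sum] at h
  rw [hcoe, ← map_sum, hT, ← hcoe, Real.mul_rpow (sq_nonneg κ) (sum_nonneg fun _ _ => sq_nonneg _),
    ← Real.sqrt_eq_rpow, Real.sqrt_sq hκ.le, mul_left_comm] at h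
  exact le_of_mul_le_mul_left h hκ

theorem DecIneq.rescale {m : ℕ} {C : ℝ} (hC : DecIneq k m C) {s lam : ℝ} (hlam : 0 < lam)
    (f : ℕ → 𝓢(Ek k, ℂ)) (hf : ∀ j < m, Function.support (𝓕 ⇑(f j)) ⊆
      UBox k 1 (s + lam * ((j : ℝ) / m)) (s + lam * (((j : ℝ) + 1) / m))) :
    LpN (pk k) (fun x => ∑ j ∈ range m, f j x) ≤
      C * (∑ j ∈ range m, LpN (pk k) (f j) ^ 2) ^ ((1 : ℝ) / 2) := by
  rcases k.eq_zero_or_pos with rfl | hk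
  · exact hC f fun j _ => (UBox_zero _ _ _).symm ▸ Set.subset_univ _
  set A := momentRescale k s hlam.ne'
  set T := fourierCompAffine (E := ℂ) A (momentCurve k s)
  have hp : 0 < pk k := zero_lt_one.trans_le (one_le_pk hk)
  refine LpN_sum_le_of_map T.toLinearMap (κ := |(A : Ek k →L[ℝ] Ek k).det|⁻¹ *
      |(A.symmAdjoint : Ek k →L[ℝ] Ek k).det|⁻¹ ^ (pk k)⁻¹) ?_ (fun u => ?_) _ f
    (hC _ fun j hj => ?_)
  · have hdet : ∀ B : Ek k ≃L[ℝ] Ek k, 0 < |(B : Ek k →L[ℝ] Ek k).det|⁻¹ :=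
      fun B => inv_pos.mpr (abs_pos.mpr B.toLinearEquiv.isUnit_det'.ne_zero)
    exact mul_pos (hdet A) (Real.rpow_pos_of_pos (hdet _) _)
  · exact LpN_of_norm_eq_mul_comp hp (by positivity) _ (norm_fourierCompAffine_apply A _ u)
  · rw [ContinuousLinearMap.coe_coe, fourier_fourierCompAffine, Function.support_comp_eq_preimage]
    exact (Set.preimage_mono (hf j hj)).trans (momentRescale_preimage_UBox_subset 1 s hlam _ _)

end Decoupling

theorem stmt3_general (k n i m m' : ℕ) (hm' : 0 < m')
    (hm : m = 2 ^ n * m')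
    (f : ℕ → SchwartzMap (Ek k) ℂ)
    (hf : ∀ j < m', Function.support (𝓕 ⇑(f j)) ⊆
      UBox k 1 ((i : ℝ)/2^n + (j:ℝ)/m) ((i:ℝ)/2^n + ((j:ℝ)+1)/m)) :
    LpN (pk k) (fun x => ∑ j ∈ Finset.range m', f j x) ≤
      DecConst k m' * (∑ j ∈ Finset.range m', LpN (pk k) (f j) ^ 2) ^ ((1:ℝ)/2) := by
  have hrescale : ∀ x : ℝ, x / m = ((2 : ℝ) ^ n)⁻¹ * (x / m') := fun x => by
    rw [hm, Nat.cast_mul, Nat.cast_pow, Nat.cast_ofNat, div_mul_eq_div_div_swap, div_eq_inv_mul]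
  have hsqrt : √m' ∈ {C : ℝ | 0 ≤ C ∧ ∀ l : ℕ, 0 < l → l ≤ m' → DecIneq k l C} :=
    ⟨Real.sqrt_nonneg _, fun l hl hlm' =>
      (decIneq_sqrt hl).mono (Real.sqrt_le_sqrt (by exact_mod_cast hlm'))⟩
  refine le_sInf_mul ⟨_, hsqrt⟩ (by positivity) fun C ⟨_, hC⟩ => ?_
  refine (hC m' hm' le_rfl).rescale (s := i / 2 ^ n) (lam := (2 ^ n)⁻¹) (by positivity) f
    fun j hj => ?_
  simpa only [hrescale] using hf j hj

theorem stmt3 (k n i m m' : ℕ) (hm' : 0 < m') (hi : i < 2 ^ n)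
    (hm : m = 2 ^ n * m') (hδ : 2 ^ n < m)
    (f : ℕ → SchwartzMap (Ek k) ℂ)
    (hf : ∀ j < m', Function.support (𝓕 ⇑(f j)) ⊆
      UBox k 1 ((i : ℝ)/2^n + (j:ℝ)/m) ((i:ℝ)/2^n + ((j:ℝ)+1)/m)) :
    LpN (pk k) (fun x => ∑ j ∈ Finset.range m', f j x) ≤
      DecConst k m' * (∑ j ∈ Finset.range m', LpN (pk k) (f j) ^ 2) ^ ((1:ℝ)/2) :=
  stmt3_general k n i m m' hm' hm f hf

end
end

section
/- Let D : ℕ⁻¹ → [1,∞), let C₈ ≥ 1, n₀ ∈ ℕ, a > 0, and ε > 0. Assume: (i) there exists C_ε ≥ 1 such that D(δ) ≤ C_ε·δ^{−ε} for all δ ∈ ℕ⁻¹; and (ii) for every C ≥ 1, if D(δ) ≤ C·δ^{−ε} for all δ ∈ ℕ⁻¹, then D(δ) ≤ C₈·2^{n₀·3^{10a/ε}}·C^{1−3^{−a/ε}}·δ^{−ε} for all δ ∈ ℕ⁻¹. Then D(δ) ≤ C₈^{3^{a/ε}}·2^{n₀·3^{11a/ε}}·δ^{−ε} for all δ ∈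 ℕ⁻¹. -/
/-!
If `D ≤ C δ^{-ε}` implies `D ≤ K C^θ δ^{-ε}` with `0 ≤ θ < 1`, iterating from the initial
constant `C₀` gives `D ≤ C_k δ^{-ε}` along `C_{k+1} = K C_k^θ`. With `M = K^{1/(1-θ)}` the fixed
point of `C ↦ K C^θ`, one has `C_k = M C₀^{θ^k}`, which tends to `M`. Here
`K = C₈ 2^{n₀ 3^{10a/ε}}` and `θ = 1 - 3^{-a/ε}`, so `M = K^{3^{a/ε}}` is the claimed constant.
-/

open Real Filter Topology

/-- `δ ∈ ℕ⁻¹ = {1/n : n ∈ ℕ}`. -/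
def NatRecip (δ : ℝ) : Prop := ∃ n : ℕ, 0 < n ∧ δ = 1 / n

theorem mul_rpow_rpow_inv_one_sub {K θ : ℝ} (hK : 0 < K) (hθ : θ ≠ 1) :
    K * (K ^ (1 - θ)⁻¹) ^ θ = K ^ (1 - θ)⁻¹ := by
  have h : 1 - θ ≠ 0 := sub_ne_zero.2 (Ne.symm hθ)
  rw [← rpow_mul hK.le, ← rpow_one_add' hK.le]
  · congr 1
    field_simp
    ring
  · field_simp
    simpa using h

section Bootstrap

variable {ι : Type*} {F w : ι → ℝ} {K θ C₀ : ℝ}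

theorem le_mul_rpow_pow_of_bootstrap (hK : 1 ≤ K) (hθ₀ : 0 ≤ θ) (hθ₁ : θ < 1)
    (hC₀ : 1 ≤ C₀) (hw : ∀ i, 0 ≤ w i) (h₀ : ∀ i, F i ≤ C₀ * w i)
    (hstep : ∀ C, 1 ≤ C → (∀ i, F i ≤ C * w i) → ∀ i, F i ≤ K * C ^ θ * w i) (k : ℕ) :
    ∀ i, F i ≤ K ^ (1 - θ)⁻¹ * C₀ ^ (θ ^ k) * w i := by
  have hM : 1 ≤ K ^ (1 - θ)⁻¹ := one_le_rpow hK (inv_nonneg.2 (sub_nonneg.2 hθ₁.le))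
  induction k with
  | zero =>
    intro i
    rw [pow_zero, rpow_one, mul_assoc]
    exact (h₀ i).trans (le_mul_of_one_le_left (mul_nonneg (by positivity) (hw i)) hM)
  | succ k ih =>
    have hC : 1 ≤ K ^ (1 - θ)⁻¹ * C₀ ^ (θ ^ k) :=
      one_le_mul_of_one_le_of_one_le hM (one_le_rpow hC₀ (pow_nonneg hθ₀ k))
    convert hstep _ hC ih using 3
    rw [mul_rpow (by positivity) (by positivity), ← mul_assoc,
      mul_rpow_rpow_inv_one_sub (by positivity) hθ₁.ne, ← rpow_mul (by positivity),
      ← pow_succ]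

theorem le_rpow_inv_one_sub_mul_of_bootstrap (hK : 1 ≤ K) (hθ₀ : 0 ≤ θ) (hθ₁ : θ < 1)
    (hw : ∀ i, 0 ≤ w i) (h₀ : ∃ C₀, 1 ≤ C₀ ∧ ∀ i, F i ≤ C₀ * w i)
    (hstep : ∀ C, 1 ≤ C → (∀ i, F i ≤ C * w i) → ∀ i, F i ≤ K * C ^ θ * w i) (i : ι) :
    F i ≤ K ^ (1 - θ)⁻¹ * w i := by
  obtain ⟨C₀, hC₀, h₀⟩ := h₀
  have hpow : Tendsto (fun k : ℕ => C₀ ^ (θ ^ k)) atTop (𝓝 1) := by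
    simpa [Function.comp_def] using
      (continuousAt_const_rpow (by positivity : C₀ ≠ 0)).tendsto.comp
        (tendsto_pow_atTop_nhds_zero_of_lt_one hθ₀ hθ₁)
  have hlim : Tendsto (fun k : ℕ => K ^ (1 - θ)⁻¹ * C₀ ^ (θ ^ k) * w i) atTop
      (𝓝 (K ^ (1 - θ)⁻¹ * w i)) := by
    simpa using (hpow.const_mul _).mul_const (w i)
  exact ge_of_tendsto' hlim fun k =>
    le_mul_rpow_pow_of_bootstrap hK hθ₀ hθ₁ hC₀ hw h₀ hstep k i

end Bootstrap

theorem stmt17_general (D : ℝ → ℝ) (C₈ : ℝ) (n₀ : ℕ) (a ε : ℝ)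
    (hC₈ : 1 ≤ C₈) (ha : 0 < a) (hε : 0 < ε)
    (h1 : ∃ Cε : ℝ, 1 ≤ Cε ∧ ∀ δ : ℝ, NatRecip δ → D δ ≤ Cε * δ ^ (-ε))
    (h2 : ∀ C : ℝ, 1 ≤ C → (∀ δ : ℝ, NatRecip δ → D δ ≤ C * δ ^ (-ε)) →
      ∀ δ : ℝ, NatRecip δ →
        D δ ≤ C₈ * 2 ^ ((n₀:ℝ) * 3 ^ (10*a/ε)) * C ^ (1 - (3:ℝ) ^ (-(a/ε))) * δ ^ (-ε)) :
    ∀ δ : ℝ, NatRecip δ →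
      D δ ≤ C₈ ^ ((3:ℝ) ^ (a/ε)) * 2 ^ ((n₀:ℝ) * 3 ^ (11*a/ε)) * δ ^ (-ε) := by
  have h3 : (1 - (1 - (3:ℝ) ^ (-(a/ε))))⁻¹ = 3 ^ (a/ε) := by
    rw [sub_sub_cancel, rpow_neg (by norm_num), inv_inv]
  have hθ₀ : 0 ≤ 1 - (3:ℝ) ^ (-(a/ε)) :=
    sub_nonneg.2 (rpow_le_one_of_one_le_of_nonpos (by norm_num) (neg_nonpos.2 (div_pos ha hε).le))
  have hθ₁ : 1 - (3:ℝ) ^ (-(a/ε)) < 1 := sub_lt_self _ (by positivity)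
  have hK : 1 ≤ C₈ * 2 ^ ((n₀:ℝ) * 3 ^ (10*a/ε)) :=
    one_le_mul_of_one_le_of_one_le hC₈ (one_le_rpow (by norm_num) (by positivity))
  have hMK : (C₈ * 2 ^ ((n₀:ℝ) * 3 ^ (10*a/ε))) ^ (3:ℝ) ^ (a/ε)
      = C₈ ^ (3:ℝ) ^ (a/ε) * 2 ^ ((n₀:ℝ) * 3 ^ (11*a/ε)) := by
    rw [mul_rpow (by positivity) (by positivity), ← rpow_mul (by norm_num), mul_assoc,
      ← rpow_add (by norm_num)]
    ring_nf
  intro δ hδ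
  have := le_rpow_inv_one_sub_mul_of_bootstrap (F := fun δ : {δ // NatRecip δ} => D δ)
    (w := fun δ => (δ : ℝ) ^ (-ε)) hK hθ₀ hθ₁
    (fun δ => rpow_nonneg (by obtain ⟨n, -, h⟩ := δ.2; rw [h]; positivity) _)
    (by obtain ⟨C₀, hC₀, h₀⟩ := h1; exact ⟨C₀, hC₀, fun δ => h₀ δ δ.2⟩)
    (fun C hC h δ => h2 C hC (fun δ hδ => h ⟨δ, hδ⟩) δ δ.2) ⟨δ, hδ⟩
  rwa [h3, hMK] at this

theorem stmt17 (D : ℝ → ℝ) (C₈ : ℝ) (n₀ : ℕ) (a ε : ℝ)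
    (hC₈ : 1 ≤ C₈) (ha : 0 < a) (hε : 0 < ε)
    (hD : ∀ δ : ℝ, NatRecip δ → 1 ≤ D δ)
    (h1 : ∃ Cε : ℝ, 1 ≤ Cε ∧ ∀ δ : ℝ, NatRecip δ → D δ ≤ Cε * δ ^ (-ε))
    (h2 : ∀ C : ℝ, 1 ≤ C → (∀ δ : ℝ, NatRecip δ → D δ ≤ C * δ ^ (-ε)) →
      ∀ δ : ℝ, NatRecip δ →
        D δ ≤ C₈ * 2 ^ ((n₀:ℝ) * 3 ^ (10*a/ε)) * C ^ (1 - (3:ℝ) ^ (-(a/ε))) * δ ^ (-ε)) :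
    ∀ δ : ℝ, NatRecip δ →
      D δ ≤ C₈ ^ ((3:ℝ) ^ (a/ε)) * 2 ^ ((n₀:ℝ) * 3 ^ (11*a/ε)) * δ ^ (-ε) :=
  stmt17_general D C₈ n₀ a ε hC₈ ha hε h1 h2
end

section
/- Let A ≥ e, ε₀ > 0, and let D : ℕ⁻¹ → [1,∞) satisfy D(δ) ≤ A^{A^{1/ε}}·δ^{−ε} for every ε ∈ (0, ε₀) and every δ ∈ ℕ⁻¹. Then there exist δ₀ ∈ (0,1) and C > 0 such that for all δ ∈ ℕ⁻¹ with 0 < δ < δ₀: D(δ) ≤ exp(C·log(δ⁻¹)/log(log(δ⁻¹))). -/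
open Real

noncomputable section

theorem stmt18 (A ε₀ : ℝ) (hA : Real.exp 1 ≤ A) (hε₀ : 0 < ε₀) (D : ℝ → ℝ)
    (hD : ∀ δ : ℝ, NatRecip δ → 1 ≤ D δ)
    (h : ∀ ε : ℝ, 0 < ε → ε < ε₀ → ∀ δ : ℝ, NatRecip δ →
      D δ ≤ A ^ (A ^ (1/ε)) * δ ^ (-ε)) :
    ∃ δ₀ ∈ Set.Ioo (0:ℝ) 1, ∃ C > (0:ℝ), ∀ δ : ℝ, NatRecip δ → δ < δ₀ →
      D δ ≤ Real.exp (C * Real.log δ⁻¹ / Real.log (Real.log δ⁻¹)) := by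
  have hApos : (0:ℝ) < A := lt_of_lt_of_le (Real.exp_pos 1) hA
  set K := Real.log A with hKdef
  have hK1 : 1 ≤ K := by
    have := Real.log_le_log (Real.exp_pos 1) hA
    simpa [Real.log_exp] using this
  have hKpos : 0 < K := lt_of_lt_of_le one_pos hK1
  set M := max ((4*K)^4 + 1) (Real.exp (2*K/ε₀ + 1)) with hMdef
  have hM1 : (4*K)^4 + 1 ≤ M := le_max_left _ _
  have hM2 : Real.exp (2*K/ε₀ + 1) ≤ M := le_max_right _ _
  have h4K : (0:ℝ) < 4*K := by linarith
  have hMpos : 0 < M := lt_of_lt_of_le (by positivity) hM1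
  refine ⟨Real.exp (-M), ⟨Real.exp_pos _, by
      rw [Real.exp_lt_one_iff]; linarith⟩, 2*K+1, by linarith, ?_⟩
  intro δ hδ hδlt
  obtain ⟨n, hn, hδn⟩ := hδ
  have hδpos : 0 < δ := by rw [hδn]; positivity
  set L := Real.log δ⁻¹ with hLdef
  have hLlog : Real.log δ = -L := by rw [hLdef, Real.log_inv]; ring
  have hML : M < L := by
    have := Real.log_lt_log hδpos hδlt
    rw [Real.log_exp, hLlog] at this
    linarith
  have hL1 : 1 < L := by nlinarith [pow_pos h4K 4]
  have hLpos : 0 < L := by linarith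
  have hlogL : 2*K/ε₀ + 1 < Real.log L := by
    rw [show (2*K/ε₀ + 1) = Real.log (Real.exp (2*K/ε₀ + 1)) from (Real.log_exp _).symm]
    exact Real.log_lt_log (Real.exp_pos _) (lt_of_le_of_lt hM2 hML)
  have hlogL1 : 1 < Real.log L := by
    have : 0 < 2*K/ε₀ := by positivity
    linarith
  have hlogLpos : 0 < Real.log L := by linarith
  set ε := 2*K / Real.log L with hεdef
  have hεpos : 0 < ε := by positivity
  have hεlt : ε < ε₀ := by
    rw [hεdef, div_lt_iff₀ hlogLpos]
    have h2 : 2*K/ε₀ < Real.log L := by linarith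
    have := (div_lt_iff₀ hε₀).mp h2
    linarith
  have hbound := h ε hεpos hεlt δ ⟨n, hn, hδn⟩
  -- rewrite the RHS of hbound
  have hA1ε : A ^ ((1:ℝ)/ε) = Real.exp (Real.log L / 2) := by
    rw [Real.rpow_def_of_pos hApos]
    congr 1
    rw [hεdef]
    field_simp
    ring
  have hAA : A ^ (A ^ ((1:ℝ)/ε)) = Real.exp (K * Real.exp (Real.log L / 2)) := by
    rw [Real.rpow_def_of_pos hApos, hA1ε]
  have hδε : δ ^ (-ε) = Real.exp (ε * L) := by
    rw [Real.rpow_def_of_pos hδpos, hLlog]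
    congr 1
    ring
  have hhalf : Real.exp (Real.log L / 2) = L ^ ((1:ℝ)/2) := by
    rw [Real.rpow_def_of_pos hLpos]
    congr 1
    ring
  -- key inequality: K * log L ≤ L ^ (1/2)
  have h4le : 4*K ≤ L ^ ((1:ℝ)/4) := by
    have h1 : (4*K)^4 ≤ L := by linarith
    have h2 : ((4*K)^4 : ℝ) ^ ((1:ℝ)/4) ≤ L ^ ((1:ℝ)/4) :=
      Real.rpow_le_rpow (by positivity) h1 (by norm_num)
    have h3 : ((4*K)^4 : ℝ) ^ ((1:ℝ)/4) = 4*K := by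
      rw [← Real.rpow_natCast (4*K) 4, ← Real.rpow_mul (le_of_lt h4K)]
      norm_num
    rwa [h3] at h2
  have hlogle : Real.log L ≤ 4 * L ^ ((1:ℝ)/4) := by
    have := Real.log_le_rpow_div (le_of_lt hLpos) (by norm_num : (0:ℝ) < 1/4)
    calc Real.log L ≤ L ^ ((1:ℝ)/4) / (1/4) := this
      _ = 4 * L ^ ((1:ℝ)/4) := by ring
  have hquarter : L ^ ((1:ℝ)/4) * L ^ ((1:ℝ)/4) = L ^ ((1:ℝ)/2) := by
    rw [← Real.rpow_add hLpos]
    norm_num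
  have hqpos : 0 < L ^ ((1:ℝ)/4) := Real.rpow_pos_of_pos hLpos _
  have hkey : K * Real.log L ≤ L ^ ((1:ℝ)/2) := by
    calc K * Real.log L ≤ K * (4 * L ^ ((1:ℝ)/4)) := by
          apply mul_le_mul_of_nonneg_left hlogle (le_of_lt hKpos)
      _ = (4*K) * L ^ ((1:ℝ)/4) := by ring
      _ ≤ L ^ ((1:ℝ)/4) * L ^ ((1:ℝ)/4) := by
          apply mul_le_mul_of_nonneg_right h4le (le_of_lt hqpos)
      _ = L ^ ((1:ℝ)/2) := hquarter
  have hhalfsq : L ^ ((1:ℝ)/2) * L ^ ((1:ℝ)/2) = L := by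
    rw [← Real.rpow_add hLpos]
    norm_num
  have hpos2 : 0 < L ^ ((1:ℝ)/2) := Real.rpow_pos_of_pos hLpos _
  have hterm1 : K * L ^ ((1:ℝ)/2) ≤ L / Real.log L := by
    rw [le_div_iff₀ hlogLpos]
    calc K * L ^ ((1:ℝ)/2) * Real.log L = (K * Real.log L) * L ^ ((1:ℝ)/2) := by ring
      _ ≤ L ^ ((1:ℝ)/2) * L ^ ((1:ℝ)/2) := by
          apply mul_le_mul_of_nonneg_right hkey (le_of_lt hpos2)
      _ = L := hhalfsq
  have hterm2 : ε * L = 2*K * L / Real.log L := by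
    rw [hεdef]; ring
  have hsum : K * L ^ ((1:ℝ)/2) + ε * L ≤ (2*K+1) * L / Real.log L := by
    rw [hterm2]
    have : (2*K+1) * L / Real.log L = L / Real.log L + 2*K*L / Real.log L := by ring
    rw [this]
    linarith
  calc D δ ≤ A ^ (A ^ (1/ε)) * δ ^ (-ε) := hbound
    _ = Real.exp (K * L ^ ((1:ℝ)/2)) * Real.exp (ε * L) := by
        rw [show (1/ε) = ((1:ℝ)/ε) from rfl, hAA, hδε, hhalf]
    _ = Real.exp (K * L ^ ((1:ℝ)/2) + ε * L) := (Real.exp_add _ _).symm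
    _ ≤ Real.exp ((2*K+1) * L / Real.log L) := Real.exp_le_exp.mpr hsum
end
end
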